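/- arXiv:1504.07732 — 3 statements merged into one kernel-verified Lean document; each statement's English description precedes it below -/
import Mathlib

section
/- Let m : I → ℕ and branching multiplicities n_{ji} ∈ ℕ with n_j := ∑_i n_{ji} m_i, all finitely supported, and suppose each i with m_i ≠ 0 has some j with n_{ji} ≠ 0. If ∑_j n_j² = ∑_i m_i², then ∑_j n_j = ∑_i m_i. -/
/-- If each column of branching multiplicities is nonzero (for `m_i ≠ 0`) and the
sums of squares of multiplicities agree, then the sums of multiplicities agree. -/
theorem stmt_3 {I J : Type*} [Fintype I] [Fintype J] (m : I → ℕ) (n : J → I → ℕ)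
    (hcol : ∀ i, m i ≠ 0 → ∃ j, n j i ≠ 0)
    (h2 : (∑ j, (∑ i, n j i * m i) ^ 2) = ∑ i, (m i) ^ 2) :
    (∑ j, ∑ i, n j i * m i) = ∑ i, m i := by
  -- Step 1: for each j, ∑ i, n j i * m i ^ 2 ≤ (∑ i, n j i * m i) ^ 2
  have key : ∀ j, (∑ i, n j i * m i ^ 2) ≤ (∑ i, n j i * m i) ^ 2 := by
    intro j
    rw [sq, Finset.sum_mul]
    apply Finset.sum_le_sum
    intro i _
    rcases Nat.eq_zero_or_pos (n j i) with h | h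
    · simp [h]
    · have hm : m i ≤ ∑ k, n j k * m k := by
        calc m i ≤ n j i * m i := Nat.le_mul_of_pos_left _ h
        _ ≤ ∑ k, n j k * m k :=
          Finset.single_le_sum (f := fun k => n j k * m k) (fun _ _ => Nat.zero_le _)
            (Finset.mem_univ i)
      calc n j i * m i ^ 2 = n j i * m i * m i := by ring
      _ ≤ n j i * m i * (∑ k, n j k * m k) := Nat.mul_le_mul_left _ hm
  -- Step 2: pointwise lower bound ∑ i, m i ^ 2 ≤ ∑ i, (∑ j, n j i) * m i ^ 2
  have lower : ∀ i, m i ^ 2 ≤ (∑ j, n j i) * m i ^ 2 := by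
    intro i
    rcases Nat.eq_zero_or_pos (m i) with h | h
    · simp [h]
    · obtain ⟨j, hj⟩ := hcol i h.ne'
      have : 1 ≤ ∑ j, n j i :=
        le_trans (Nat.one_le_iff_ne_zero.mpr hj)
          (Finset.single_le_sum (f := fun j => n j i) (fun _ _ => Nat.zero_le _)
            (Finset.mem_univ j))
      calc m i ^ 2 = 1 * m i ^ 2 := (one_mul _).symm
      _ ≤ (∑ j, n j i) * m i ^ 2 := Nat.mul_le_mul_right _ this
  -- Middle sum equals ∑ i m i ^ 2
  have mid_le : (∑ i, (∑ j, n j i) * m i ^ 2) ≤ ∑ i, m i ^ 2 := by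
    calc (∑ i, (∑ j, n j i) * m i ^ 2) = ∑ j, ∑ i, n j i * m i ^ 2 := by
          rw [Finset.sum_comm]
          exact Finset.sum_congr rfl fun i _ => Finset.sum_mul _ _ _
    _ ≤ ∑ j, (∑ i, n j i * m i) ^ 2 := Finset.sum_le_sum fun j _ => key j
    _ = ∑ i, m i ^ 2 := h2
  have mid_eq : (∑ i, (∑ j, n j i) * m i ^ 2) = ∑ i, m i ^ 2 :=
    le_antisymm mid_le (Finset.sum_le_sum fun i _ => lower i)
  -- termwise equality
  have term : ∀ i ∈ Finset.univ, m i ^ 2 = (∑ j, n j i) * m i ^ 2 :=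
    (Finset.sum_eq_sum_iff_of_le fun i _ => lower i).mp mid_eq.symm
  have term' : ∀ i, (∑ j, n j i) * m i = m i := by
    intro i
    rcases Nat.eq_zero_or_pos (m i) with h | h
    · simp [h]
    · have := (term i (Finset.mem_univ i)).symm
      rw [sq, ← mul_assoc] at this
      exact Nat.eq_of_mul_eq_mul_right h this
  calc (∑ j, ∑ i, n j i * m i) = ∑ i, (∑ j, n j i) * m i := by
        rw [Finset.sum_comm]
        exact Finset.sum_congr rfl fun i _ => (Finset.sum_mul _ _ _).symm
  _ = ∑ i, m i := Finset.sum_congr rfl fun i _ => term' i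
end

section
/- Let m : I → ℕ and branching multiplicities n_{ji} ∈ ℕ with n_j := ∑_i n_{ji} m_i, all finitely supported, with each column n_{·i} nonzero for m_i ≠ 0. Then ∑_j n_j² = ∑_i m_i² if and only if both (a) ∑_j n_{ji} = 1 for all i with m_i ≠ 0, and (b) for all i ≠ k with m_i ≠ 0 and m_k ≠ 0, the columns n_{·i} and n_{·k} are distinct. -/
private lemma aux_sum_indicator {J : Type*} [Fintype J] [DecidableEq J] (f : J → ℕ)
    (hf : ∑ j, f j = 1) {j : J} (hj : f j ≠ 0) :
    ∀ j', f j' = if j' = j then 1 else 0 := by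
  have h1 : f j + ∑ j' ∈ Finset.univ.erase j, f j' = 1 := by
    rw [Finset.add_sum_erase _ f (Finset.mem_univ j)]; exact hf
  have hfj : f j = 1 := by omega
  have hz : ∑ j' ∈ Finset.univ.erase j, f j' = 0 := by omega
  intro j'
  by_cases h : j' = j
  · simp [h, hfj]
  · simp only [h, if_false]
    exact (Finset.sum_eq_zero_iff.mp hz) j' (Finset.mem_erase.mpr ⟨h, Finset.mem_univ _⟩)

private lemma aux_sq_sum_one {J : Type*} [Fintype J] (f : J → ℕ) (h : ∃ j, f j ≠ 0) :
    (∑ j, f j * f j) = 1 ↔ ∑ j, f j = 1 := by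
  constructor
  · intro hsq
    have h1 : ∑ j, f j ≤ ∑ j, f j * f j := by
      apply Finset.sum_le_sum
      intro j _
      rcases Nat.eq_zero_or_pos (f j) with h0 | h0
      · simp [h0]
      · exact Nat.le_mul_of_pos_left _ h0
    obtain ⟨j, hj⟩ := h
    have h2 : f j ≤ ∑ j, f j := Finset.single_le_sum (fun _ _ => Nat.zero_le _) (Finset.mem_univ j)
    omega
  · intro hs
    have : ∀ j, f j * f j = f j := by
      intro j
      have : f j ≤ 1 := hs ▸ Finset.single_le_sum (fun _ _ => Nat.zero_le _) (Finset.mem_univ j)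
      interval_cases (f j) <;> rfl
    simp_rw [this]; exact hs

/-- With nonzero columns for `m_i ≠ 0`: `∑_j n_j² = ∑_i m_i²` iff (a) each `i` with
`m_i ≠ 0` has `∑_j n_{ji} = 1`, and (b) columns at distinct indices with nonzero
multiplicity are distinct. -/
theorem stmt_4 {I J : Type*} [Fintype I] [Fintype J] (m : I → ℕ) (n : J → I → ℕ)
    (hcol : ∀ i, m i ≠ 0 → ∃ j, n j i ≠ 0) :
    (∑ j, (∑ i, n j i * m i) ^ 2) = (∑ i, (m i) ^ 2) ↔
      ((∀ i, m i ≠ 0 → (∑ j, n j i) = 1) ∧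
        ∀ i k, i ≠ k → m i ≠ 0 → m k ≠ 0 → (fun j => n j i) ≠ (fun j => n j k)) := by
  classical
  set c : I → I → ℕ := fun i k => ∑ j, n j i * n j k with hc
  have lhs_eq : (∑ j, (∑ i, n j i * m i) ^ 2)
      = ∑ p ∈ (Finset.univ ×ˢ Finset.univ : Finset (I × I)),
        c p.1 p.2 * (m p.1 * m p.2) := by
    rw [Finset.sum_product]
    calc ∑ j, (∑ i, n j i * m i) ^ 2
        = ∑ j, ∑ i, ∑ k, (n j i * n j k) * (m i * m k) := by
          simp_rw [sq, Finset.sum_mul_sum, mul_mul_mul_comm]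
      _ = ∑ i, ∑ k, ∑ j, (n j i * n j k) * (m i * m k) := by
          rw [Finset.sum_comm]
          exact Finset.sum_congr rfl fun i _ => Finset.sum_comm
      _ = ∑ i, ∑ k, c i k * (m i * m k) := by
          simp_rw [hc, Finset.sum_mul]
  have rhs_eq : (∑ i, (m i) ^ 2)
      = ∑ p ∈ (Finset.univ ×ˢ Finset.univ : Finset (I × I)),
        (if p.1 = p.2 then m p.1 * m p.2 else 0) := by
    rw [Finset.sum_product]
    simp [sq, Finset.sum_ite_eq]
  have hle : ∀ p ∈ (Finset.univ ×ˢ Finset.univ : Finset (I × I)),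
      (if p.1 = p.2 then m p.1 * m p.2 else 0) ≤ c p.1 p.2 * (m p.1 * m p.2) := by
    rintro ⟨i, k⟩ -
    by_cases h : i = k
    · subst h
      simp only [if_pos rfl]
      rcases Nat.eq_zero_or_pos (m i) with h0 | h0
      · simp [h0]
      · obtain ⟨j, hj⟩ := hcol i (Nat.pos_iff_ne_zero.mp h0)
        have hc1 : 1 ≤ c i i := by
          calc 1 ≤ n j i * n j i := Nat.one_le_iff_ne_zero.mpr (by positivity)
            _ ≤ c i i := Finset.single_le_sum (f := fun j => n j i * n j i) (fun _ _ => Nat.zero_le _) (Finset.mem_univ j)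
        exact Nat.le_mul_of_pos_left _ hc1
    · simp [h]
  rw [lhs_eq, rhs_eq, eq_comm, Finset.sum_eq_sum_iff_of_le hle]
  have pt : (∀ p ∈ (Finset.univ ×ˢ Finset.univ : Finset (I × I)),
      (if p.1 = p.2 then m p.1 * m p.2 else 0) = c p.1 p.2 * (m p.1 * m p.2)) ↔
      (∀ i k, m i ≠ 0 → m k ≠ 0 → c i k = if i = k then 1 else 0) := by
    constructor
    · intro H i k hi hk
      have := H (i, k) (by simp)
      simp only at this
      by_cases h : i = k
      · subst h
        rw [if_pos rfl] at this ⊢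
        have hmm : 0 < m i * m i := by positivity
        nlinarith [this]
      · rw [if_neg h] at this ⊢
        rcases Nat.mul_eq_zero.mp this.symm with h1 | h1
        · exact h1
        · exact absurd h1 (by positivity)
    · intro H p _
      obtain ⟨i, k⟩ := p
      simp only
      rcases Nat.eq_zero_or_pos (m i) with h0 | h0
      · simp [h0]
      rcases Nat.eq_zero_or_pos (m k) with h1 | h1
      · simp [h1]
      rw [H i k (by omega) (by omega)]
      by_cases h : i = k <;> simp [h]
  rw [pt]
  constructor
  · intro H
    have ha : ∀ i, m i ≠ 0 → (∑ j, n j i) = 1 := by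
      intro i hi
      have := H i i hi hi
      rw [if_pos rfl] at this
      exact (aux_sq_sum_one _ (hcol i hi)).mp this
    refine ⟨ha, ?_⟩
    intro i k hik hi hk heq
    have h0 := H i k hi hk
    rw [if_neg hik] at h0
    have : c i k = c i i := by
      simp only [hc]
      refine Finset.sum_congr rfl fun j _ => ?_
      have : n j k = n j i := (congrFun heq j).symm
      rw [this]
    rw [this] at h0
    have h1 := H i i hi hi
    rw [if_pos rfl] at h1
    omega
  · rintro ⟨ha, hb⟩ i k hi hk
    by_cases h : i = k
    · subst h
      rw [if_pos rfl]
      exact (aux_sq_sum_one _ (hcol i hi)).mpr (ha i hi)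
    · rw [if_neg h]
      by_contra hne
      obtain ⟨j, -, hj⟩ := Finset.exists_ne_zero_of_sum_ne_zero hne
      have hji : n j i ≠ 0 := fun h0 => hj (by simp [h0])
      have hjk : n j k ≠ 0 := fun h0 => hj (by simp [h0])
      apply hb i k h hi hk
      funext j'
      rw [aux_sum_indicator _ (ha i hi) hji j', aux_sum_indicator _ (ha k hk) hjk j']
end

section
/- Consider the subgroup H of SU(2) generated by the 24 matrices ±I, ±iσ_z, ±iσ_y, ±iσ_x, and all sixteen matrices (±I ± iσ_z ± iσ_y ± iσ_x)/2 (where σ_x, σ_y, σ_z are the Pauli matrices, so iσ_z = diag(i,−i), etc.). Then H is a finite group of order 24, a proper subgroup of SU(2), and the commutant of the tensor square representation V ⊗ V of H (where V = ℂ² is the standard representation) is 2-dimensional, equal to the dimension of the commutant of V ⊗ V under the full group SU(2). -/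
open Matrix Kronecker

noncomputable def su2m0 : Matrix (Fin 2) (Fin 2) ℂ := 1
noncomputable def su2m1 : Matrix (Fin 2) (Fin 2) ℂ := !![Complex.I, 0; 0, -Complex.I]
noncomputable def su2m2 : Matrix (Fin 2) (Fin 2) ℂ := !![0, -1; 1, 0]
noncomputable def su2m3 : Matrix (Fin 2) (Fin 2) ℂ := !![0, Complex.I; Complex.I, 0]

/-- The 24 generating matrices: `±I, ±iσ_z, ±(−iσ_y), ±iσ_x` and the sixteen matrices
`(±I ± iσ_z ± (−iσ_y) ± iσ_x)/2`. -/
noncomputable def genSet : Set (Matrix (Fin 2) (Fin 2) ℂ) :=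
  ({su2m0, -su2m0, su2m1, -su2m1, su2m2, -su2m2, su2m3, -su2m3} :
      Set (Matrix (Fin 2) (Fin 2) ℂ)) ∪
    {A | ∃ ε : Fin 4 → ℂ, (∀ j, ε j = 1 ∨ ε j = -1) ∧
      A = (1 / 2 : ℂ) • (ε 0 • su2m0 + ε 1 • su2m1 + ε 2 • su2m2 + ε 3 • su2m3)}

/-- The group `H` generated (multiplicatively) by the 24 matrices. -/
noncomputable def grpH : Submonoid (Matrix (Fin 2) (Fin 2) ℂ) :=
  Submonoid.closure genSet

/-- The commutant of the tensor square `A ↦ A ⊗ A` of a set of `2×2` matrices. -/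
noncomputable def tsqCommutant (S : Set (Matrix (Fin 2) (Fin 2) ℂ)) :
    Submodule ℂ (Matrix (Fin 2 × Fin 2) (Fin 2 × Fin 2) ℂ) where
  carrier := {X | ∀ A ∈ S, X * (A ⊗ₖ A) = (A ⊗ₖ A) * X}
  add_mem' := by
    intro a b ha hb A hA
    rw [add_mul, mul_add, ha A hA, hb A hA]
  zero_mem' := by
    intro A hA
    rw [zero_mul, mul_zero]
  smul_mem' := by
    intro c X hX A hA
    rw [Matrix.smul_mul, Matrix.mul_smul, hX A hA]


-- ===== auxiliary infrastructure =====

noncomputable def Mc (a b c d : ℂ) : Matrix (Fin 2) (Fin 2) ℂ :=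
  !![a + b * Complex.I, -c + d * Complex.I;
     c + d * Complex.I, a - b * Complex.I]

lemma Mc_congr {a b c d a' b' c' d' : ℂ} (h1 : a = a') (h2 : b = b') (h3 : c = c')
    (h4 : d = d') : Mc a b c d = Mc a' b' c' d' := by rw [h1, h2, h3, h4]

lemma Mc_lin (a b c d : ℂ) :
    Mc a b c d = a • su2m0 + b • su2m1 + c • su2m2 + d • su2m3 := by
  ext i j
  fin_cases i <;> fin_cases j <;>
    simp [Mc, su2m0, su2m1, su2m2, su2m3, Matrix.one_apply] <;> ring

lemma Mc_mul (a b c d e f g h : ℂ) :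
    Mc a b c d * Mc e f g h =
      Mc (a*e - b*f - c*g - d*h) (a*f + b*e - c*h + d*g)
        (a*g + b*h + c*e - d*f) (a*h - b*g + c*f + d*e) := by
  ext i j
  fin_cases i <;> fin_cases j <;>
    (simp [Mc, Matrix.mul_apply, Fin.sum_univ_two, Complex.ext_iff]; constructor <;> ring)

lemma Mc_det (a b c d : ℂ) : (Mc a b c d).det = a^2 + b^2 + c^2 + d^2 := by
  simp [Mc, Matrix.det_fin_two]
  linear_combination (-(b^2) - d^2) * Complex.I_sq

abbrev Z4 := ℤ × ℤ × ℤ × ℤ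

def zmul (x y : Z4) : Z4 :=
  (x.1*y.1 - x.2.1*y.2.1 - x.2.2.1*y.2.2.1 - x.2.2.2*y.2.2.2,
   x.1*y.2.1 + x.2.1*y.1 - x.2.2.1*y.2.2.2 + x.2.2.2*y.2.2.1,
   x.1*y.2.2.1 + x.2.1*y.2.2.2 + x.2.2.1*y.1 - x.2.2.2*y.2.1,
   x.1*y.2.2.2 - x.2.1*y.2.2.1 + x.2.2.1*y.2.1 + x.2.2.2*y.1)

def zconj (x : Z4) : Z4 := (x.1, -x.2.1, -x.2.2.1, -x.2.2.2)

noncomputable def Mz (x : Z4) : Matrix (Fin 2) (Fin 2) ℂ :=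
  Mc ((x.1 : ℂ)/2) ((x.2.1 : ℂ)/2) ((x.2.2.1 : ℂ)/2) ((x.2.2.2 : ℂ)/2)

lemma Mz_lin (x : Z4) : Mz x = ((x.1:ℂ)/2) • su2m0 + ((x.2.1:ℂ)/2) • su2m1 +
    ((x.2.2.1:ℂ)/2) • su2m2 + ((x.2.2.2:ℂ)/2) • su2m3 := Mc_lin _ _ _ _

lemma key2 {a b a' b' : ℤ} (h : (a:ℂ) + b*Complex.I = a' + b'*Complex.I) :
    a = a' ∧ b = b' := by
  have hre := congrArg Complex.re h
  have him := congrArg Complex.im h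
  simp [Complex.ext_iff] at hre him
  exact ⟨by exact_mod_cast hre, by exact_mod_cast him⟩

lemma Mz_inj : Function.Injective Mz := by
  intro x y h
  have h00 := congrFun (congrFun h 0) 0
  have h10 := congrFun (congrFun h 1) 0
  simp only [Mz, Mc, Matrix.cons_val', Matrix.cons_val_zero, Matrix.cons_val_one,
    Matrix.head_cons, Matrix.empty_val', Matrix.cons_val_fin_one, Matrix.head_fin_const,
    Matrix.of_apply] at h00 h10
  have e1 : (x.1:ℂ) + x.2.1*Complex.I = y.1 + y.2.1*Complex.I := by linear_combination 2*h00
  have e2 : (x.2.2.1:ℂ) + x.2.2.2*Complex.I = y.2.2.1 + y.2.2.2*Complex.I := by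
    linear_combination 2*h10
  obtain ⟨a1, a2⟩ := key2 e1
  obtain ⟨a3, a4⟩ := key2 e2
  exact Prod.ext a1 (Prod.ext a2 (Prod.ext a3 a4))

def Qz : Finset Z4 :=
  {(2,0,0,0), (-2,0,0,0), (0,2,0,0), (0,-2,0,0), (0,0,2,0), (0,0,-2,0), (0,0,0,2), (0,0,0,-2),
   (1,1,1,1), (1,1,1,-1), (1,1,-1,1), (1,1,-1,-1),
   (1,-1,1,1), (1,-1,1,-1), (1,-1,-1,1), (1,-1,-1,-1),
   (-1,1,1,1), (-1,1,1,-1), (-1,1,-1,1), (-1,1,-1,-1),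
   (-1,-1,1,1), (-1,-1,1,-1), (-1,-1,-1,1), (-1,-1,-1,-1)}

lemma Qz_card : Qz.card = 24 := by decide

lemma Qz_mul : ∀ x ∈ Qz, ∀ y ∈ Qz, ∃ z ∈ Qz,
    zmul x y = (2*z.1, 2*z.2.1, 2*z.2.2.1, 2*z.2.2.2) := by decide

lemma Qz_conj : ∀ x ∈ Qz, zconj x ∈ Qz ∧ zmul x (zconj x) = (4,0,0,0) ∧
    zmul (zconj x) x = (4,0,0,0) := by decide

lemma Qz_norm : ∀ x ∈ Qz, x.1^2 + x.2.1^2 + x.2.2.1^2 + x.2.2.2^2 = 4 := by decide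

lemma half_mem {z0 z1 z2 z3 : ℤ} (h0 : z0 = 1 ∨ z0 = -1) (h1 : z1 = 1 ∨ z1 = -1)
    (h2 : z2 = 1 ∨ z2 = -1) (h3 : z3 = 1 ∨ z3 = -1) :
    Mz (z0, z1, z2, z3) ∈ genSet := by
  refine Or.inr ⟨![(z0:ℂ), (z1:ℂ), (z2:ℂ), (z3:ℂ)], ?_, ?_⟩
  · intro j
    fin_cases j <;> [rcases h0 with h|h; rcases h1 with h|h; rcases h2 with h|h;
      rcases h3 with h|h] <;> simp [h]
  · rw [Mz_lin]
    simp only [Matrix.cons_val_zero, Matrix.cons_val_one, Matrix.head_cons,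
      Matrix.cons_val_two, Matrix.tail_cons, Matrix.cons_val_three]
    rw [smul_add, smul_add, smul_add, smul_smul, smul_smul, smul_smul, smul_smul]
    norm_num
    module

lemma unit_mem0 : Mz (2,0,0,0) = su2m0 := by rw [Mz_lin]; norm_num
lemma unit_mem0' : Mz (-2,0,0,0) = -su2m0 := by rw [Mz_lin]; norm_num
lemma unit_mem1 : Mz (0,2,0,0) = su2m1 := by rw [Mz_lin]; norm_num
lemma unit_mem1' : Mz (0,-2,0,0) = -su2m1 := by rw [Mz_lin]; norm_num
lemma unit_mem2 : Mz (0,0,2,0) = su2m2 := by rw [Mz_lin]; norm_num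
lemma unit_mem2' : Mz (0,0,-2,0) = -su2m2 := by rw [Mz_lin]; norm_num
lemma unit_mem3 : Mz (0,0,0,2) = su2m3 := by rw [Mz_lin]; norm_num
lemma unit_mem3' : Mz (0,0,0,-2) = -su2m3 := by rw [Mz_lin]; norm_num
lemma Mz_one : Mz (2,0,0,0) = 1 := unit_mem0

lemma genSet_eq : genSet = Mz '' (Qz : Set Z4) := by
  apply Set.Subset.antisymm
  · rintro A (h | ⟨ε, hε, rfl⟩)
    · simp only [Set.mem_insert_iff, Set.mem_singleton_iff] at h
      rcases h with rfl|rfl|rfl|rfl|rfl|rfl|rfl|rfl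
      · exact ⟨(2,0,0,0), by decide, unit_mem0⟩
      · exact ⟨(-2,0,0,0), by decide, unit_mem0'⟩
      · exact ⟨(0,2,0,0), by decide, unit_mem1⟩
      · exact ⟨(0,-2,0,0), by decide, unit_mem1'⟩
      · exact ⟨(0,0,2,0), by decide, unit_mem2⟩
      · exact ⟨(0,0,-2,0), by decide, unit_mem2'⟩
      · exact ⟨(0,0,0,2), by decide, unit_mem3⟩
      · exact ⟨(0,0,0,-2), by decide, unit_mem3'⟩
    · have s : ∀ j : Fin 4, ∃ z : ℤ, (z = 1 ∨ z = -1) ∧ (z : ℂ) = ε j := by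
        intro j
        rcases hε j with h|h
        · exact ⟨1, Or.inl rfl, by simp [h]⟩
        · exact ⟨-1, Or.inr rfl, by simp [h]⟩
      obtain ⟨z0, hz0, e0⟩ := s 0
      obtain ⟨z1, hz1, e1⟩ := s 1
      obtain ⟨z2, hz2, e2⟩ := s 2
      obtain ⟨z3, hz3, e3⟩ := s 3
      refine ⟨(z0, z1, z2, z3), ?_, ?_⟩
      · rcases hz0 with rfl|rfl <;> rcases hz1 with rfl|rfl <;> rcases hz2 with rfl|rfl <;>
          rcases hz3 with rfl|rfl <;> decide
      · rw [Mz_lin, ← e0, ← e1, ← e2, ← e3]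
        simp only
        rw [smul_add, smul_add, smul_add, smul_smul, smul_smul, smul_smul, smul_smul]
        norm_num
        module
  · rintro A ⟨x, hx, rfl⟩
    have hx' : x ∈ Qz := hx
    fin_cases hx' <;>
      first
        | exact Or.inl (by rw [unit_mem0]; simp)
        | exact Or.inl (by rw [unit_mem0']; simp)
        | exact Or.inl (by rw [unit_mem1]; simp)
        | exact Or.inl (by rw [unit_mem1']; simp)
        | exact Or.inl (by rw [unit_mem2]; simp)
        | exact Or.inl (by rw [unit_mem2']; simp)
        | exact Or.inl (by rw [unit_mem3]; simp)
        | exact Or.inl (by rw [unit_mem3']; simp)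
        | exact half_mem (by norm_num) (by norm_num) (by norm_num) (by norm_num)

lemma Mz_mul {x y z : Z4} (hz : zmul x y = (2*z.1, 2*z.2.1, 2*z.2.2.1, 2*z.2.2.2)) :
    Mz x * Mz y = Mz z := by
  obtain ⟨h1, h2, h3, h4⟩ : (zmul x y).1 = 2*z.1 ∧ (zmul x y).2.1 = 2*z.2.1 ∧
      (zmul x y).2.2.1 = 2*z.2.2.1 ∧ (zmul x y).2.2.2 = 2*z.2.2.2 := by
    rw [hz]; exact ⟨rfl, rfl, rfl, rfl⟩
  simp only [zmul] at h1 h2 h3 h4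
  have c1 : ((x.1:ℂ)*y.1 - x.2.1*y.2.1 - x.2.2.1*y.2.2.1 - x.2.2.2*y.2.2.2) = 2*(z.1:ℂ) := by
    exact_mod_cast congrArg (fun t : ℤ => (t : ℂ)) h1
  have c2 : ((x.1:ℂ)*y.2.1 + x.2.1*y.1 - x.2.2.1*y.2.2.2 + x.2.2.2*y.2.2.1) = 2*(z.2.1:ℂ) := by
    exact_mod_cast congrArg (fun t : ℤ => (t : ℂ)) h2
  have c3 : ((x.1:ℂ)*y.2.2.1 + x.2.1*y.2.2.2 + x.2.2.1*y.1 - x.2.2.2*y.2.1) = 2*(z.2.2.1:ℂ) := by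
    exact_mod_cast congrArg (fun t : ℤ => (t : ℂ)) h3
  have c4 : ((x.1:ℂ)*y.2.2.2 - x.2.1*y.2.2.1 + x.2.2.1*y.2.1 + x.2.2.2*y.1) = 2*(z.2.2.2:ℂ) := by
    exact_mod_cast congrArg (fun t : ℤ => (t : ℂ)) h4
  rw [Mz, Mz, Mz, Mc_mul]
  exact Mc_congr (by linear_combination c1/4) (by linear_combination c2/4)
    (by linear_combination c3/4) (by linear_combination c4/4)

lemma grpH_eq : (grpH : Set (Matrix (Fin 2) (Fin 2) ℂ)) = Mz '' (Qz : Set Z4) := by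
  apply Set.Subset.antisymm
  · intro A hA
    refine Submonoid.closure_induction (fun B hB => ?_) ?_ (fun B C _ _ hB hC => ?_) hA
    · rw [genSet_eq] at hB; exact hB
    · exact ⟨(2,0,0,0), by decide, Mz_one⟩
    · obtain ⟨x, hx, rfl⟩ := hB
      obtain ⟨y, hy, rfl⟩ := hC
      obtain ⟨z, hz, hzz⟩ := Qz_mul x hx y hy
      exact ⟨z, hz, (Mz_mul hzz).symm⟩
  · rintro A ⟨x, hx, rfl⟩
    exact Submonoid.subset_closure (by rw [genSet_eq]; exact ⟨x, hx, rfl⟩)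

lemma grpH_mem_iff (A : Matrix (Fin 2) (Fin 2) ℂ) :
    A ∈ grpH ↔ A ∈ Mz '' (Qz : Set Z4) := by
  rw [← SetLike.mem_coe, grpH_eq]

lemma Mz_star (x : Z4) : star (Mz x) = Mz (zconj x) := by
  ext i j
  fin_cases i <;> fin_cases j <;>
    (simp [Mz, Mc, zconj, Complex.ext_iff]; push_cast; norm_num) <;>
    first | (constructor <;> ring) | ring

lemma Mz_su2 {x : Z4} (hx : x ∈ Qz) :
    Mz x ∈ Matrix.specialUnitaryGroup (Fin 2) ℂ := by
  obtain ⟨hconj, hmul1, hmul2⟩ := Qz_conj x hx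
  rw [Matrix.mem_specialUnitaryGroup_iff]
  constructor
  · rw [Matrix.mem_unitaryGroup_iff, Mz_star]
    rw [Mz_mul (z := ((2:ℤ),(0:ℤ),(0:ℤ),(0:ℤ))) (by rw [hmul1]; rfl), Mz_one]
  · have hn := Qz_norm x hx
    have hc : ((x.1:ℂ))^2 + (x.2.1:ℂ)^2 + (x.2.2.1:ℂ)^2 + (x.2.2.2:ℂ)^2 = 4 := by
      exact_mod_cast congrArg (fun t : ℤ => (t : ℂ)) hn
    rw [Mz, Mc_det]
    linear_combination hc/4

-- the outside element
noncomputable def A0 : Matrix (Fin 2) (Fin 2) ℂ := Mc ((3/5 : ℝ) : ℂ) ((4/5 : ℝ) : ℂ) 0 0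

lemma A0_su2 : A0 ∈ Matrix.specialUnitaryGroup (Fin 2) ℂ := by
  rw [Matrix.mem_specialUnitaryGroup_iff]
  constructor
  · rw [Matrix.mem_unitaryGroup_iff]
    ext i j
    fin_cases i <;> fin_cases j <;>
      simp [A0, Mc, Matrix.mul_apply, Fin.sum_univ_two, Matrix.one_apply,
        Matrix.star_apply, map_ofNat, Complex.ext_iff, Complex.div_re, Complex.div_im,
        Complex.normSq] <;> norm_num
  · rw [A0, Mc_det]
    norm_num

lemma A0_notH (x : Z4) : Mz x ≠ A0 := by
  intro h
  have h00 := congrFun (congrFun h 0) 0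
  simp only [Mz, Mc, A0, Matrix.cons_val', Matrix.cons_val_zero, Matrix.cons_val_one,
    Matrix.head_cons, Matrix.empty_val', Matrix.cons_val_fin_one, Matrix.head_fin_const,
    Matrix.of_apply] at h00
  have hre := congrArg Complex.re h00
  simp [Complex.ext_iff] at hre
  have h5 : (5 * x.1 : ℝ) = 6 := by push_cast; linarith
  have h6 : (5 * x.1 : ℤ) = 6 := by exact_mod_cast h5
  omega

-- ===== commutant =====

noncomputable def Pswap : Matrix (Fin 2 × Fin 2) (Fin 2 × Fin 2) ℂ :=
  Matrix.of fun p q => if p.1 = q.2 ∧ p.2 = q.1 then 1 else 0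

lemma Pswap_comm (A : Matrix (Fin 2) (Fin 2) ℂ) :
    Pswap * (A ⊗ₖ A) = (A ⊗ₖ A) * Pswap := by
  ext ⟨i, j⟩ ⟨k, l⟩
  fin_cases i <;> fin_cases j <;> fin_cases k <;> fin_cases l <;>
    simp [Pswap, Matrix.mul_apply, Fintype.sum_prod_type, Fin.sum_univ_two,
      Matrix.kroneckerMap_apply] <;> ring

noncomputable def g0 : Matrix (Fin 2) (Fin 2) ℂ :=
  (1 / 2 : ℂ) • ((1:ℂ) • su2m0 + (1:ℂ) • su2m1 + (1:ℂ) • su2m2 + (1:ℂ) • su2m3)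

lemma g0_mem : g0 ∈ grpH := by
  refine Submonoid.subset_closure (Or.inr ⟨fun _ => 1, fun j => Or.inl rfl, ?_⟩)
  rfl

lemma su2m1_mem : su2m1 ∈ grpH := Submonoid.subset_closure (Or.inl (by simp))
lemma su2m3_mem : su2m3 ∈ grpH := Submonoid.subset_closure (Or.inl (by simp))

lemma commut_main (X : Matrix (Fin 2 × Fin 2) (Fin 2 × Fin 2) ℂ)
    (h1 : X * (su2m1 ⊗ₖ su2m1) = (su2m1 ⊗ₖ su2m1) * X)
    (h3 : X * (su2m3 ⊗ₖ su2m3) = (su2m3 ⊗ₖ su2m3) * X)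
    (h2 : X * (g0 ⊗ₖ g0) = (g0 ⊗ₖ g0) * X) :
    X = X (0,1) (0,1) • 1 + X (0,1) (1,0) • Pswap := by
  have e1 := fun p q => congrFun (congrFun h1 p) q
  have e3 := fun p q => congrFun (congrFun h3 p) q
  have e2 := fun p q => congrFun (congrFun h2 p) q
  have z1 := e1 (0,0) (0,1)
  have z2 := e1 (0,0) (1,0)
  have z3 := e1 (0,1) (0,0)
  have z4 := e1 (0,1) (1,1)
  have z5 := e1 (1,0) (0,0)
  have z6 := e1 (1,0) (1,1)
  have z7 := e1 (1,1) (0,1)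
  have z8 := e1 (1,1) (1,0)
  have s1 := e3 (0,0) (1,1)
  have s2 := e3 (0,0) (0,0)
  have s3 := e3 (0,1) (1,0)
  have s4 := e3 (0,1) (0,1)
  have a2 := e2 (0,0) (0,0)
  have a2' := e2 (0,0) (0,1)
  simp [su2m0, su2m1, su2m2, su2m3, g0, Matrix.mul_apply, Fintype.sum_prod_type,
    Fin.sum_univ_two, Matrix.kroneckerMap_apply, Matrix.one_apply, Complex.I_mul_I]
    at z1 z2 z3 z4 z5 z6 z7 z8 s1 s2 s3 s4 a2 a2'
  have hB : X (0,0) (0,1) = 0 := by linear_combination z1/2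
  have hC : X (0,0) (1,0) = 0 := by linear_combination z2/2
  have hE : X (0,1) (0,0) = 0 := by linear_combination -z3/2
  have hF : X (1,0) (0,0) = 0 := by linear_combination -z5/2
  have hz4 : X (0,1) (1,1) = 0 := by linear_combination -z4/2
  have hz6 : X (1,0) (1,1) = 0 := by linear_combination -z6/2
  have hz7 : X (1,1) (0,1) = 0 := by linear_combination z7/2
  have hz8 : X (1,1) (1,0) = 0 := by linear_combination z8/2
  have hs1 : X (0,0) (0,0) = X (1,1) (1,1) := by linear_combination s1
  have hs2 : X (0,0) (1,1) = X (1,1) (0,0) := by linear_combination s2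
  have hs3 : X (0,1) (0,1) = X (1,0) (1,0) := by linear_combination s3
  have hs4 : X (0,1) (1,0) = X (1,0) (0,1) := by linear_combination s4
  have hbeta : X (0,0) (1,1) = 0 := by
    linear_combination (-Complex.I)*a2 + (X (0,0) (1,1))*Complex.I_sq
      + (Complex.I*((1+Complex.I)/2)^2)*hB + (Complex.I*((1+Complex.I)/2)^2)*hC
      + (-Complex.I*((1+Complex.I)/2)*((-1+Complex.I)/2))*hE
      + (-Complex.I*((-1+Complex.I)/2)*((1+Complex.I)/2))*hF
      + (Complex.I*((-1+Complex.I)/2)^2)*hs2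
  have hmain : X (0,0) (0,0) = X (0,1) (0,1) + X (0,1) (1,0) := by
    linear_combination (-2)*a2' +
      ((X (0,0) (0,0) - X (0,1) (0,1) - X (0,1) (1,0))/2)*Complex.I_sq
      + (2*((1+Complex.I)/2)*((1-Complex.I)/2) - 2*((1+Complex.I)/2)^2)*hB
      + (2*((1+Complex.I)/2)*((-1+Complex.I)/2))*hC
      + (2*((1+Complex.I)/2)*((1-Complex.I)/2))*hbeta
      + (-2*((-1+Complex.I)/2)^2)*hz7
      + (2*((1+Complex.I)/2)*((-1+Complex.I)/2))*hs4
  ext ⟨i, j⟩ ⟨k, l⟩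
  fin_cases i <;> fin_cases j <;> fin_cases k <;> fin_cases l <;>
    simp only [Matrix.add_apply, Matrix.smul_apply, Matrix.one_apply, Pswap,
      Matrix.of_apply, smul_eq_mul] <;>
    norm_num <;>
    first
      | rfl
      | exact hB | exact hC | exact hE | exact hF
      | exact hz4 | exact hz6 | exact hz7 | exact hz8
      | exact hbeta
      | linear_combination hmain
      | linear_combination hmain - hs1
      | linear_combination hbeta - hs2
      | linear_combination -hs3
      | linear_combination -hs4

noncomputable def spanIP : Submodule ℂ (Matrix (Fin 2 × Fin 2) (Fin 2 × Fin 2) ℂ) :=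
  Submodule.span ℂ (Set.range ![1, Pswap])

lemma span_le_su2 : spanIP ≤ tsqCommutant
    (Matrix.specialUnitaryGroup (Fin 2) ℂ : Set (Matrix (Fin 2) (Fin 2) ℂ)) := by
  rw [spanIP, Submodule.span_le]
  rintro _ ⟨i, rfl⟩
  fin_cases i
  · intro A _
    simp
  · intro A _
    exact Pswap_comm A

lemma su2_le_H : tsqCommutant
    (Matrix.specialUnitaryGroup (Fin 2) ℂ : Set (Matrix (Fin 2) (Fin 2) ℂ)) ≤
    tsqCommutant (grpH : Set (Matrix (Fin 2) (Fin 2) ℂ)) := by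
  intro X hX A hA
  refine hX A ?_
  rw [grpH_eq] at hA
  obtain ⟨x, hx, rfl⟩ := hA
  exact Mz_su2 hx

lemma H_le_span : tsqCommutant (grpH : Set (Matrix (Fin 2) (Fin 2) ℂ)) ≤ spanIP := by
  intro X hX
  have hx1 := hX su2m1 su2m1_mem
  have hx3 := hX su2m3 su2m3_mem
  have hx2 := hX g0 g0_mem
  rw [commut_main X hx1 hx3 hx2]
  exact Submodule.add_mem _
    (Submodule.smul_mem _ _ (Submodule.subset_span ⟨0, rfl⟩))
    (Submodule.smul_mem _ _ (Submodule.subset_span ⟨1, rfl⟩))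

lemma li_pair : LinearIndependent ℂ
    ![(1 : Matrix (Fin 2 × Fin 2) (Fin 2 × Fin 2) ℂ), Pswap] := by
  rw [linearIndependent_fin2]
  constructor
  · intro h
    have := congrFun (congrFun h ((0,0) : Fin 2 × Fin 2)) ((0,0) : Fin 2 × Fin 2)
    simp [Pswap] at this
  · intro a h
    have := congrFun (congrFun h ((0,1) : Fin 2 × Fin 2)) ((0,1) : Fin 2 × Fin 2)
    simp [Pswap, Matrix.smul_apply, Matrix.one_apply] at this

/-- The subgroup `H ⊆ SU(2)` generated by the 24 listed matrices is a finite group of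
order 24, a proper subgroup of `SU(2)`, closed under inverses, and the commutant of its
tensor-square representation is 2-dimensional — the same dimension as the commutant of
the tensor square of the standard representation of the full group `SU(2)`. -/
theorem stmt_19 :
    ((grpH : Set (Matrix (Fin 2) (Fin 2) ℂ))).Finite ∧
    ((grpH : Set (Matrix (Fin 2) (Fin 2) ℂ))).ncard = 24 ∧
    (∀ A ∈ grpH, ∃ B ∈ grpH, A * B = 1 ∧ B * A = 1) ∧
    (grpH : Set (Matrix (Fin 2) (Fin 2) ℂ)) ⊆
      (Matrix.specialUnitaryGroup (Fin 2) ℂ : Set (Matrix (Fin 2) (Fin 2) ℂ)) ∧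
    (grpH : Set (Matrix (Fin 2) (Fin 2) ℂ)) ≠
      (Matrix.specialUnitaryGroup (Fin 2) ℂ : Set (Matrix (Fin 2) (Fin 2) ℂ)) ∧
    Module.finrank ℂ (tsqCommutant (grpH : Set (Matrix (Fin 2) (Fin 2) ℂ))) = 2 ∧
    Module.finrank ℂ
      (tsqCommutant (Matrix.specialUnitaryGroup (Fin 2) ℂ :
        Set (Matrix (Fin 2) (Fin 2) ℂ))) = 2 := by
  have hset := grpH_eq
  refine ⟨?_, ?_, ?_, ?_, ?_, ?_, ?_⟩
  · rw [hset]; exact Qz.finite_toSet.image _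
  · rw [hset, Set.ncard_image_of_injective _ Mz_inj, Set.ncard_coe_finset, Qz_card]
  · intro A hA
    obtain ⟨x, hx, rfl⟩ := (grpH_mem_iff A).mp hA
    obtain ⟨hc, hm1, hm2⟩ := Qz_conj x hx
    refine ⟨Mz (zconj x), (grpH_mem_iff _).mpr ⟨_, hc, rfl⟩, ?_, ?_⟩
    · rw [Mz_mul (z := ((2:ℤ),(0:ℤ),(0:ℤ),(0:ℤ))) (by rw [hm1]; rfl), Mz_one]
    · rw [Mz_mul (z := ((2:ℤ),(0:ℤ),(0:ℤ),(0:ℤ))) (by rw [hm2]; rfl), Mz_one]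
  · rw [hset]
    rintro A ⟨x, hx, rfl⟩
    exact Mz_su2 hx
  · intro h
    have hmem : A0 ∈ (grpH : Set (Matrix (Fin 2) (Fin 2) ℂ)) := by
      rw [h]; exact A0_su2
    rw [hset] at hmem
    obtain ⟨x, hx, hEq⟩ := hmem
    exact A0_notH x hEq
  · have he : tsqCommutant (grpH : Set (Matrix (Fin 2) (Fin 2) ℂ)) = spanIP :=
      le_antisymm H_le_span (le_trans span_le_su2 su2_le_H)
    rw [he, spanIP]
    exact (finrank_span_eq_card li_pair).trans (by simp)
  · have he : tsqCommutant (Matrix.specialUnitaryGroup (Fin 2) ℂ :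
        Set (Matrix (Fin 2) (Fin 2) ℂ)) = spanIP :=
      le_antisymm (le_trans su2_le_H H_le_span) span_le_su2
    rw [he, spanIP]
    exact (finrank_span_eq_card li_pair).trans (by simp)
end
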